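/- Let N be an odd positive integer and let C be a weakly self-dual cyclic binary code of length N with generator polynomial g(X). Then the number of nonzero coefficients of the product g(X)·g^rev(X), computed in F_2[X], is divisible by four. -/

import Mathlib

open Polynomial

/-- Cyclic shift: `(c_0,…,c_{N-1}) ↦ (c_{N-1},c_0,…,c_{N-2})`. -/
def cshift {N : ℕ} {F : Type*} (c : Fin N → F) : Fin N → F :=
  fun i => c ((finRotate N).symm i)

/-- The code polynomial associated to a codeword. -/
noncomputable def toPoly {F : Type*} [Semiring F] {N : ℕ} (c : Fin N → F) : Polynomial F :=
  ∑ i, Polynomial.C (c i) * Polynomial.X ^ (i : ℕ)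

/-- The dual code of a linear code. -/
def dualCode {F : Type*} [CommRing F] {ι : Type*} [Fintype ι]
    (C : Submodule F (ι → F)) : Submodule F (ι → F) where
  carrier := { v | ∀ c ∈ C, ∑ i, c i * v i = 0 }
  zero_mem' := by intro c hc; simp
  add_mem' := by
    intro a b ha hb c hc
    simp [mul_add, Finset.sum_add_distrib, ha c hc, hb c hc]
  smul_mem' := by
    intro r a ha c hc
    simp [Pi.smul_apply, smul_eq_mul, mul_left_comm, ← Finset.mul_sum, ha c hc]

/-- `g` is the generator polynomial of `C`: the (unique) monic nonzero code
polynomial of least degree. -/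
def IsGenPoly {F : Type*} [Field F] {N : ℕ} (C : Submodule F (Fin N → F))
    (g : Polynomial F) : Prop :=
  g.Monic ∧ (∃ c ∈ C, toPoly c = g) ∧
    ∀ c ∈ C, toPoly c ≠ 0 → g.degree ≤ (toPoly c).degree

/-! Write `N = n + 1`. Modulo `X ^ N - 1`, multiplying code polynomials is cyclic convolution of
codewords, and the convolution of a codeword `c` with its reversal lists the inner products of `c`
with its cyclic shifts, which vanish by self-duality. Since `X ^ (n - deg g) * g * g^rev` is the
product of the code polynomials of `c` and its reversal, `X ^ N - 1 ∣ g * g^rev`, say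
`g * g^rev = (X ^ N - 1) * q` with `deg q < N`; the nonzero coefficients of this product are two
disjoint copies of those of `q`. Finally `g(1) = ∑ cᵢ² = 0`, so `(X - 1) ^ 2 ∣ g * g^rev`, and as
`(X ^ N - 1) / (X - 1)` takes the odd value `N` at `1`, `q(1) = 0`: `q` has even weight. -/

section CyclicShift

variable {R : Type*} {n : ℕ}

lemma cshift_apply (c : Fin (n + 1) → R) (i : Fin (n + 1)) : cshift c i = c (i - 1) := by
  simp [cshift]

lemma cshift_sub_castSucc (c : Fin (n + 1) → R) (t : Fin n) :
    cshift (fun i => c (i - t.castSucc)) = fun i => c (i - t.succ) := by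
  ext i
  rw [cshift_apply, ← Fin.coeSucc_eq_succ, sub_sub, add_comm (1 : Fin (n + 1))]

lemma cshift_apply_zero (c : Fin (n + 1) → R) : cshift c 0 = c (Fin.last n) := by
  simp [cshift_apply, ← Fin.last_add_one]

lemma cshift_apply_succ (c : Fin (n + 1) → R) (i : Fin n) : cshift c i.succ = c i.castSucc := by
  rw [cshift_apply, ← Fin.coeSucc_eq_succ, add_sub_cancel_right]

variable [CommRing R]

theorem mk_X_mul_toPoly (c : Fin (n + 1) → R) :
    AdjoinRoot.mk (X ^ (n + 1) - 1) (X * toPoly c) = AdjoinRoot.mk _ (toPoly (cshift c)) := by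
  rw [AdjoinRoot.mk_eq_mk]
  refine ⟨C (c (Fin.last n)), ?_⟩
  rw [toPoly, toPoly, Fin.sum_univ_castSucc, Fin.sum_univ_succ]
  simp only [cshift_apply_zero, cshift_apply_succ, Fin.val_castSucc, Fin.val_succ, Fin.val_last,
    Fin.val_zero, mul_add, Finset.mul_sum]
  simp only [mul_left_comm X, ← pow_succ']
  ring

theorem mk_X_pow_mul_toPoly (c : Fin (n + 1) → R) (t : Fin (n + 1)) :
    AdjoinRoot.mk (X ^ (n + 1) - 1) (X ^ (t : ℕ) * toPoly c) =
      AdjoinRoot.mk _ (toPoly fun i => c (i - t)) := by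
  induction t using Fin.induction with
  | zero => simp
  | succ t ih =>
    rw [Fin.val_succ, pow_succ' X (t : ℕ), mul_assoc, map_mul, ← Fin.val_castSucc, ih, ← map_mul,
      mk_X_mul_toPoly, cshift_sub_castSucc]

def cyclicConv (a b : Fin (n + 1) → R) : Fin (n + 1) → R :=
  fun j => ∑ i, a i * b (j - i)

theorem mk_toPoly_mul (a b : Fin (n + 1) → R) :
    AdjoinRoot.mk (X ^ (n + 1) - 1) (toPoly a * toPoly b) =
      AdjoinRoot.mk _ (toPoly (cyclicConv a b)) := by
  have hconv : toPoly (cyclicConv a b) = ∑ i, C (a i) * toPoly fun j => b (j - i) := by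
    simp only [toPoly, cyclicConv, map_sum, map_mul, Finset.sum_mul, Finset.mul_sum, mul_assoc]
    exact Finset.sum_comm
  have hprod : toPoly a * toPoly b = ∑ i, C (a i) * (X ^ (i : ℕ) * toPoly b) := by
    simp only [toPoly, Finset.sum_mul, mul_assoc]
  rw [hprod, hconv, map_sum, map_sum]
  refine Finset.sum_congr rfl fun i _ => ?_
  rw [map_mul, mk_X_pow_mul_toPoly, map_mul]

end CyclicShift

section Reverse

variable {R : Type*} [CommRing R] {n : ℕ}

lemma natDegree_toPoly_le (c : Fin (n + 1) → R) : (toPoly c).natDegree ≤ n :=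
  natDegree_sum_le_of_forall_le _ _ fun i _ =>
    (natDegree_C_mul_X_pow_le _ _).trans (Fin.is_le i)

lemma reflect_toPoly (c : Fin (n + 1) → R) : reflect n (toPoly c) = toPoly (c ∘ Fin.rev) := by
  have hsum := map_sum (AddMonoidHom.mk' (reflect n) fun p q => reflect_add p q n : R[X] →+ R[X])
    (fun i : Fin (n + 1) => C (c i) * X ^ (i : ℕ)) Finset.univ
  simp only [AddMonoidHom.mk'_apply, reflect_C_mul_X_pow, revAt_le (Fin.is_le _)] at hsum
  rw [toPoly, hsum, toPoly, ← Equiv.sum_comp Fin.revPerm]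
  refine Finset.sum_congr rfl fun i _ => ?_
  simp [Fin.val_rev, Nat.sub_sub_self (Fin.is_le i)]

lemma reflect_eq_reverse_mul_X_pow {p : R[X]} (hp : p.natDegree ≤ n) :
    reflect n p = p.reverse * X ^ (n - p.natDegree) := by
  rw [reverse, ← reflect_one, ← reflect_mul _ _ le_rfl (natDegree_one.trans_le (Nat.zero_le _)),
    mul_one, Nat.add_sub_cancel' hp]

lemma natDegree_toPoly_mul_reverse_le (c : Fin (n + 1) → R) :
    (toPoly c * (toPoly c).reverse).natDegree ≤ 2 * n := by
  have hc := natDegree_toPoly_le c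
  have := natDegree_mul_le.trans (add_le_add hc ((reverse_natDegree_le _).trans hc))
  omega

theorem X_pow_sub_one_dvd_mul_reverse (c : Fin (n + 1) → R) (h : cyclicConv c (c ∘ Fin.rev) = 0) :
    X ^ (n + 1) - 1 ∣ toPoly c * (toPoly c).reverse := by
  have hcop : IsCoprime (X ^ (n + 1) - 1 : R[X]) (X ^ (n - (toPoly c).natDegree)) :=
    IsCoprime.pow_right ⟨-1, X ^ n, by ring⟩
  refine hcop.dvd_of_dvd_mul_right ?_
  rw [mul_assoc, ← reflect_eq_reverse_mul_X_pow (natDegree_toPoly_le c), reflect_toPoly,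
    ← AdjoinRoot.mk_eq_zero, mk_toPoly_mul, h]
  simp [toPoly]

end Reverse

def IsCyclicCode {R : Type*} [CommRing R] {N : ℕ} (C : Submodule R (Fin N → R)) : Prop :=
  ∀ c ∈ C, cshift c ∈ C

section Code

variable {R : Type*} [CommRing R] {n : ℕ} {C : Submodule R (Fin (n + 1) → R)}

theorem IsCyclicCode.comp_sub_mem (hcyc : IsCyclicCode C) {c : Fin (n + 1) → R} (hc : c ∈ C)
    (t : Fin (n + 1)) : (fun i => c (i - t)) ∈ C := by
  induction t using Fin.induction with
  | zero => simpa using hc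
  | succ t ih => simpa only [cshift_sub_castSucc] using hcyc _ ih

theorem cyclicConv_rev_eq_zero (hcyc : IsCyclicCode C) (hsd : C ≤ dualCode C)
    {c : Fin (n + 1) → R} (hc : c ∈ C) : cyclicConv c (c ∘ Fin.rev) = 0 := by
  ext j
  rw [Pi.zero_apply, ← hsd hc _ (hcyc.comp_sub_mem hc (j + 1))]
  refine Finset.sum_congr rfl fun i _ => ?_
  have hlast : Fin.last n = -1 := eq_neg_of_add_eq_zero_left (Fin.last_add_one n)
  rw [Function.comp_apply, ← Fin.last_sub, hlast, show -1 - (j - i) = i - (j + 1) by abel, mul_comm]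

end Code

lemma eval_one_toPoly {R : Type*} [CommRing R] {N : ℕ} (c : Fin N → R) :
    (toPoly c).eval 1 = ∑ i, c i := by
  simp [toPoly, eval_finsetSum]

lemma eval_one_toPoly_eq_zero_of_le_dualCode {N : ℕ} {C : Submodule (ZMod 2) (Fin N → ZMod 2)}
    (hsd : C ≤ dualCode C) {c : Fin N → ZMod 2} (hc : c ∈ C) : (toPoly c).eval 1 = 0 := by
  have hidem : ∀ x : ZMod 2, x * x = x := by decide
  simpa only [eval_one_toPoly, hidem] using hsd hc c hc

lemma sq_X_sub_one_dvd_mul_reverse {R : Type*} [CommRing R] {p : R[X]} (hp : p.eval 1 = 0) :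
    (X - 1) ^ 2 ∣ p * p.reverse := by
  have hrev : p.reverse.eval 1 = 0 := by
    let _ : Invertible (1 : R) := invertibleOne
    have := eval₂_reverse_eq_zero_iff (RingHom.id R) (1 : R) p
    rw [invOf_one] at this
    exact this.2 hp
  rw [sq, ← C_1]
  exact mul_dvd_mul (dvd_iff_isRoot.2 hp) (dvd_iff_isRoot.2 hrev)

theorem eval_one_eq_zero_of_sq_dvd {R : Type*} [CommRing R] [IsDomain R] {N : ℕ} {q : R[X]}
    (hN : (N : R) ≠ 0) (h : (X - 1) ^ 2 ∣ (X ^ N - 1) * q) : q.eval 1 = 0 := by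
  obtain ⟨r, hr⟩ := h
  have hcancel : (X - 1) * r = (∑ i ∈ Finset.range N, X ^ i) * q := by
    refine mul_left_cancel₀ (X_sub_C_ne_zero 1) ?_
    rw [C_1, ← mul_assoc, ← sq, ← hr, ← geom_sum_mul]
    ring
  have := congrArg (eval 1) hcancel
  simp only [eval_mul, eval_sub, eval_X, eval_one, sub_self, zero_mul, eval_geom_sum, one_pow,
    Finset.sum_const, Finset.card_range, nsmul_one] at this
  exact (mul_eq_zero.1 this.symm).resolve_left hN

lemma even_card_support_iff (p : (ZMod 2)[X]) : Even p.support.card ↔ p.eval 1 = 0 := by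
  have hunit : ∀ x : ZMod 2, x ≠ 0 → x = 1 := by decide
  have hcard : (p.support.card : ZMod 2) = p.eval 1 := by
    rw [eval_eq_sum, Polynomial.sum, Finset.card_eq_sum_ones, Nat.cast_sum]
    refine Finset.sum_congr rfl fun i hi => ?_
    simp [hunit _ (mem_support_iff.1 hi)]
  rw [← ZMod.natCast_eq_zero_iff_even, hcard]

theorem card_support_X_pow_sub_one_mul {R : Type*} [Ring R] {N : ℕ} {q : R[X]}
    (hq : q.natDegree < N) : ((X ^ N - 1) * q).support.card = 2 * q.support.card := by
  have hsupp : ((X ^ N - 1) * q).support = q.support.map (addLeftEmbedding N) ∪ q.support := by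
    ext m
    simp only [Finset.mem_union, Finset.mem_map, addLeftEmbedding_apply, mem_support_iff,
      sub_mul, one_mul, coeff_sub, coeff_X_pow_mul']
    by_cases hm : N ≤ m
    · rw [if_pos hm, coeff_eq_zero_of_natDegree_lt (hq.trans_le hm), sub_zero]
      constructor
      · exact fun h => Or.inl ⟨m - N, h, by omega⟩
      · rintro (⟨x, hx, rfl⟩ | h)
        · simpa using hx
        · exact absurd rfl h
    · rw [if_neg hm, zero_sub, neg_ne_zero]
      constructor
      · exact Or.inr
      · rintro (⟨x, -, rfl⟩ | h)
        · omega
        · exact h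
  have hdisj : Disjoint (q.support.map (addLeftEmbedding N)) q.support := by
    rw [Finset.disjoint_left]
    rintro _ hm hm'
    obtain ⟨x, -, rfl⟩ := Finset.mem_map.1 hm
    have := le_natDegree_of_mem_supp _ hm'
    rw [addLeftEmbedding_apply] at this
    omega
  rw [hsupp, Finset.card_union_of_disjoint hdisj, Finset.card_map, two_mul]

lemma natDegree_lt_of_natDegree_X_pow_sub_one_mul_lt {R : Type*} [Ring R] [Nontrivial R] {N : ℕ}
    {q : R[X]} (hN : N ≠ 0) (h : ((X ^ N - 1) * q).natDegree < 2 * N) : q.natDegree < N := by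
  rcases eq_or_ne q 0 with rfl | hq
  · simpa using Nat.pos_of_ne_zero hN
  · have hmonic : (X ^ N - 1 : R[X]).Monic := by simpa using monic_X_pow_sub_C (1 : R) hN
    have hdeg : (X ^ N - 1 : R[X]).natDegree = N := by
      simpa using natDegree_X_pow_sub_C (n := N) (r := (1 : R))
    rw [hmonic.natDegree_mul' hq, hdeg] at h
    omega

theorem stmt_6_general (N : ℕ) (hodd : Odd N)
    (C : Submodule (ZMod 2) (Fin N → ZMod 2))
    (hcyc : ∀ c ∈ C, cshift c ∈ C)
    (hsd : C ≤ dualCode C)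
    (g : Polynomial (ZMod 2)) (hg : IsGenPoly C g) :
    4 ∣ (g * g.reverse).support.card := by
  obtain ⟨k, rfl⟩ := hodd
  obtain ⟨-, ⟨c, hc, rfl⟩, -⟩ := hg
  obtain ⟨q, hq⟩ := X_pow_sub_one_dvd_mul_reverse c (cyclicConv_rev_eq_zero hcyc hsd hc)
  have hq1 : q.eval 1 = 0 :=
    eval_one_eq_zero_of_sq_dvd (ZMod.natCast_ne_zero_iff_odd.2 (odd_two_mul_add_one k))
      (hq ▸ sq_X_sub_one_dvd_mul_reverse (eval_one_toPoly_eq_zero_of_le_dualCode hsd hc))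
  have hdeg : q.natDegree < 2 * k + 1 :=
    natDegree_lt_of_natDegree_X_pow_sub_one_mul_lt (by omega)
      (hq ▸ (natDegree_toPoly_mul_reverse_le c).trans_lt (by omega))
  obtain ⟨m, hm⟩ := (even_card_support_iff q).2 hq1
  rw [hq, card_support_X_pow_sub_one_mul hdeg, hm]
  omega

/-- For a weakly self-dual cyclic binary code of odd length with generator
polynomial g, the number of nonzero coefficients of g * g^rev is divisible
by four. -/
theorem stmt_6 (N : ℕ) (hN : 0 < N) (hodd : Odd N)
    (C : Submodule (ZMod 2) (Fin N → ZMod 2))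
    (hcyc : ∀ c ∈ C, cshift c ∈ C)
    (hsd : C ≤ dualCode C)
    (g : Polynomial (ZMod 2)) (hg : IsGenPoly C g) :
    4 ∣ (g * g.reverse).support.card :=
  stmt_6_general N hodd C hcyc hsd g hg
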